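/- arXiv:1102.2570 — 4 statements merged into one kernel-verified Lean document; each statement's English description precedes it below -/
import Mathlib

section
/- For all d ∈ ℕ, all convex bodies K ⊂ ℝᵈ and all δ ≤ 8^{−d}, the convex floating body K_δ is nonempty and the logarithmic Hausdorff distance satisfies d_𝔏(K, K_δ) ≤ 1 + 8·δ^{1/d}. -/
open MeasureTheory Metric Set
open scoped RealInnerProductSpace ENNReal Pointwise

noncomputable section

/-- Euclidean space `ℝᵈ`. -/
abbrev Euc (d : ℕ) := EuclideanSpace ℝ (Fin d)

/-- A convex body: a compact convex set with nonempty interior. -/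
def IsConvexBody {d : ℕ} (K : Set (Euc d)) : Prop :=
  IsCompact K ∧ Convex ℝ K ∧ (interior K).Nonempty

/-- The convex floating body `K_δ`. -/
def floatingBody {d : ℕ} (K : Set (Euc d)) (δ : ℝ) : Set (Euc d) :=
  ⋂₀ {H : Set (Euc d) | ∃ θ : Euc d, ∃ t : ℝ, ‖θ‖ = 1 ∧
      H = {x : Euc d | t ≤ ⟪x, θ⟫} ∧
      ENNReal.ofReal (1 - δ) * volume K ≤ volume (H ∩ K)}

/-- The logarithmic Hausdorff distance
`d_𝔏(K,L) = inf {λ ≥ 1 : ∃ x ∈ int(K ∩ L), λ⁻¹(K−x)+x ⊆ L ⊆ λ(K−x)+x}`. -/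
def logHausdorffDist {d : ℕ} (K L : Set (Euc d)) : ℝ :=
  sInf {lam : ℝ | 1 ≤ lam ∧ ∃ x ∈ interior (K ∩ L),
    (fun y => lam⁻¹ • (y - x) + x) '' K ⊆ L ∧ L ⊆ (fun y => lam • (y - x) + x) '' K}

/-!
By Helly's theorem `K` has a centerpoint `x`: every halfspace bounded by a hyperplane through `x`
contains at least a `1 / (d + 1)` fraction of the volume of `K`, and `x` lies in the interior of
`K`. Let `{t ≤ ⟪·, θ⟫}` cut off at most a `δ` fraction of `K` and let `p` be a lowest point of `K`
in direction `θ`. The homothety with centre `p` and ratio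
`r = (t - ⟪p, θ⟫) / (⟪x, θ⟫ - ⟪p, θ⟫)` maps the part of `K` below `x` into the cut-off cap, so
`r ^ d ≤ (d + 1) δ`, whence `r ≤ 2 δ^{1/d}`. Therefore the homothety with centre `x` and ratio
`(1 + 8 δ^{1/d})⁻¹` maps `K` into every such halfspace, that is into `K_δ`, while `K_δ ⊆ K`.
-/

open Module

section Separation

variable {E : Type*} [NormedAddCommGroup E] [InnerProductSpace ℝ E] [CompleteSpace E]

theorem exists_forall_inner_lt_of_notMem_open {s : Set E} (hs : Convex ℝ s) (hso : IsOpen s)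
    {x : E} (hx : x ∉ s) : ∃ θ : E, ∀ a ∈ s, ⟪a, θ⟫ < ⟪x, θ⟫ := by
  obtain ⟨f, hf⟩ := geometric_hahn_banach_open_point hs hso hx
  refine ⟨(InnerProductSpace.toDual ℝ E).symm f, fun a ha => ?_⟩
  simpa only [real_inner_comm _ a, real_inner_comm _ x, InnerProductSpace.toDual_symm_apply]
    using hf a ha

theorem exists_norm_eq_one_forall_le_inner_of_notMem_closed {s : Set E} (hs : Convex ℝ s)
    (hsc : IsClosed s) (hne : s.Nonempty) {x : E} (hx : x ∉ s) :
    ∃ θ : E, ‖θ‖ = 1 ∧ ∃ t, ⟪x, θ⟫ < t ∧ ∀ a ∈ s, t ≤ ⟪a, θ⟫ := by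
  obtain ⟨f, u, hxu, hsu⟩ := geometric_hahn_banach_point_closed hs hsc hx
  set θ := (InnerProductSpace.toDual ℝ E).symm f
  have hθf (y : E) : ⟪y, θ⟫ = f y := by
    rw [real_inner_comm]; exact InnerProductSpace.toDual_symm_apply
  have hθ : 0 < ‖θ‖ := by
    obtain ⟨a, ha⟩ := hne
    refine norm_pos_iff.mpr fun h => ?_
    have := (hxu.trans (hsu a ha))
    rw [← hθf, ← hθf, h, inner_zero_right, inner_zero_right] at this
    exact this.false
  refine ⟨‖θ‖⁻¹ • θ, by simp [norm_smul, hθ.ne'], ‖θ‖⁻¹ * u, ?_, fun a ha => ?_⟩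
  · rw [real_inner_smul_right, hθf]
    exact mul_lt_mul_of_pos_left hxu (inv_pos.mpr hθ)
  · rw [real_inner_smul_right, hθf]
    exact mul_le_mul_of_nonneg_left (hsu a ha).le (inv_nonneg.mpr hθ.le)

end Separation

theorem self_mem_interior_image_homothety {E : Type*} [NormedAddCommGroup E] [NormedSpace ℝ E]
    {s : Set E} {x : E} (hx : x ∈ interior s) {c : ℝ} (hc : c ≠ 0) :
    x ∈ interior ((fun y => c • (y - x) + x) '' s) :=
  (AffineMap.homothety_isOpenMap x c hc).image_interior_subset s
    ⟨x, hx, by simp⟩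

section MeasureBounds

open Filter Topology

variable {α : Type*} [MeasurableSpace α] {μ : Measure α} {K : Set α}

theorem nonempty_diff_biUnion_of_mul_measure_inter_lt {ι : Type*} (hK : μ K ≠ 0)
    {B : ι → Set α} {n : ℕ} {I : Finset ι} (hI : I.card ≤ n + 1)
    (hB : ∀ i ∈ I, (n + 1 : ℝ≥0∞) * μ (K ∩ B i) < μ K) : (K \ ⋃ i ∈ I, B i).Nonempty := by
  rw [nonempty_iff_ne_empty, Ne, sdiff_eq_empty]
  intro hKB
  have hcover : (n + 1 : ℝ≥0∞) * μ K ≤ ∑ i ∈ I, (n + 1) * μ (K ∩ B i) := by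
    rw [← Finset.mul_sum]
    gcongr
    calc μ K = μ (⋃ i ∈ I, K ∩ B i) := by rw [← inter_iUnion₂, inter_eq_left.mpr hKB]
      _ ≤ ∑ i ∈ I, μ (K ∩ B i) := measure_biUnion_finset_le I _
  have hsmall : ∑ i ∈ I, (n + 1) * μ (K ∩ B i) < (n + 1 : ℝ≥0∞) * μ K := by
    rcases I.eq_empty_or_nonempty with rfl | hI₀
    · simpa [pos_iff_ne_zero] using hK
    calc _ < ∑ _i ∈ I, μ K := ENNReal.sum_lt_sum_of_nonempty hI₀ hB
      _ = I.card * μ K := by simp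
      _ ≤ (n + 1 : ℝ≥0∞) * μ K := by gcongr; exact_mod_cast hI
  exact (hcover.trans_lt hsmall).false

theorem exists_lt_mul_measure_inter_lt (hK : MeasurableSet K) (hKfin : μ K ≠ ⊤) {f : α → ℝ}
    (hf : Measurable f) {a b : ℝ≥0∞} (ha : a ≠ ⊤) {X : ℝ}
    (h : a * μ (K ∩ {y | f y ≤ X}) < b) : ∃ c, X < c ∧ a * μ (K ∩ {y | f y < c}) < b := by
  set s : ℕ → Set α := fun k => K ∩ {y | f y < X + 1 / (k + 1)}
  have hs : ⋂ k, s k = K ∩ {y | f y ≤ X} := by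
    ext y
    simp only [s, mem_iInter, mem_inter_iff, mem_ofPred_eq]
    refine ⟨fun hy => ⟨(hy 0).1, le_of_not_gt fun hX => ?_⟩,
      fun hy k => ⟨hy.1, hy.2.trans_lt (lt_add_of_pos_right X Nat.one_div_pos_of_nat)⟩⟩
    obtain ⟨k, hk⟩ := exists_nat_one_div_lt (sub_pos.mpr hX)
    linarith [(hy k).2]
  have hanti : Antitone s := fun k l hkl =>
    inter_subset_inter_right _ fun y (hy : f y < _) =>
      hy.trans_le (add_le_add_right (Nat.one_div_le_one_div hkl) X)
  have hlim : Tendsto (fun k => a * μ (s k)) atTop (𝓝 (a * μ (K ∩ {y | f y ≤ X}))) := by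
    refine ENNReal.Tendsto.const_mul ?_ (Or.inr ha)
    rw [← hs]
    exact tendsto_measure_iInter_atTop
      (fun k => (hK.inter (measurableSet_lt hf measurable_const)).nullMeasurableSet) hanti
      ⟨0, ne_top_of_le_ne_top hKfin (measure_mono inter_subset_left)⟩
  obtain ⟨k, hk⟩ := (hlim.eventually (gt_mem_nhds h)).exists
  exact ⟨_, lt_add_of_pos_right X Nat.one_div_pos_of_nat, hk⟩

end MeasureBounds

section Centerpoint

def IsCenterpoint {E : Type*} [NormedAddCommGroup E] [InnerProductSpace ℝ E] [MeasurableSpace E]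
    (μ : Measure E) (K : Set E) (x : E) : Prop :=
  ∀ θ : E, μ K ≤ (finrank ℝ E + 1 : ℝ≥0∞) * μ (K ∩ {y | ⟪y, θ⟫ ≤ ⟪x, θ⟫})

variable {E : Type*} [NormedAddCommGroup E] [InnerProductSpace ℝ E] [FiniteDimensional ℝ E]
  [MeasurableSpace E] [BorelSpace E] {μ : Measure E} [μ.IsAddHaarMeasure]

variable (μ) in
theorem addHaar_setOf_inner_eq {θ : E} (hθ : θ ≠ 0) (c : ℝ) : μ {y | ⟪y, θ⟫ = c} = 0 := by
  rcases eq_empty_or_nonempty {y : E | ⟪y, θ⟫ = c} with h | ⟨y₀, hy₀⟩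
  · simp [h]
  have hker : LinearMap.ker (innerₛₗ ℝ θ) ≠ ⊤ := fun h => hθ <| by
    simpa using (h ▸ Submodule.mem_top : θ ∈ LinearMap.ker (innerₛₗ ℝ θ))
  refine measure_mono_null (fun y (hy : ⟪y, θ⟫ = c) => ?_)
    ((measure_vadd μ y₀ _).trans (Measure.addHaar_submodule μ _ hker))
  rw [Set.mem_vadd_set_iff_neg_vadd_mem, SetLike.mem_coe, LinearMap.mem_ker, innerₛₗ_apply_apply,
    vadd_eq_add, inner_add_right, inner_neg_right, real_inner_comm y, real_inner_comm y₀, hy,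
    show ⟪y₀, θ⟫ = c from hy₀, neg_add_cancel]

theorem IsCenterpoint.exists_inner_lt {K : Set E} {x : E} (hx : IsCenterpoint μ K x)
    (hK : μ K ≠ 0) {θ : E} (hθ : θ ≠ 0) : ∃ y ∈ K, ⟪y, θ⟫ < ⟪x, θ⟫ := by
  by_contra! h
  have hnull : μ (K ∩ {y | ⟪y, θ⟫ ≤ ⟪x, θ⟫}) = 0 :=
    measure_mono_null (fun y hy => le_antisymm hy.2 (h y hy.1)) (addHaar_setOf_inner_eq μ hθ _)
  exact hK (le_antisymm (by simpa [hnull] using hx θ) bot_le)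

theorem IsCenterpoint.mem_interior {K : Set E} {x : E} (hx : IsCenterpoint μ K x)
    (hKconv : Convex ℝ K) (hKint : (interior K).Nonempty) : x ∈ interior K := by
  by_contra hxK
  obtain ⟨θ, hθ⟩ := exists_forall_inner_lt_of_notMem_open hKconv.interior isOpen_interior hxK
  have hθ₀ : θ ≠ 0 := by
    rintro rfl
    obtain ⟨a, ha⟩ := hKint
    simpa using hθ a ha
  have hK : K ⊆ {y | ⟪y, θ⟫ ≤ ⟪x, θ⟫} := by
    refine subset_closure.trans ?_
    rw [← hKconv.closure_interior_eq_closure_of_nonempty_interior hKint]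
    exact closure_minimal (fun a ha => (hθ a ha).le) (isClosed_le (by fun_prop) continuous_const)
  obtain ⟨y, hyK, hy⟩ :=
    hx.exists_inner_lt (Measure.measure_pos_of_nonempty_interior μ hKint).ne' (neg_ne_zero.mpr hθ₀)
  rw [inner_neg_right, inner_neg_right, neg_lt_neg_iff] at hy
  exact (hK hyK).not_gt hy

/-- Helly's theorem applied to the closed halfspaces whose complement in `K` has measure less than
`μ K / (dim + 1)`: by the union bound, any `dim + 1` of them meet inside `K`. -/
theorem exists_isCenterpoint {K : Set E} (hKc : IsCompact K) (hKconv : Convex ℝ K)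
    (hK : μ K ≠ 0) : ∃ x, IsCenterpoint μ K x := by
  set n := finrank ℝ E
  let ι := {p : E × ℝ // (n + 1 : ℝ≥0∞) * μ (K ∩ {y | ⟪y, p.1⟫ < p.2}) < μ K}
  have hinter (I : Finset ι) (hI : I.card ≤ n + 1) :
      (⋂ i ∈ I, K ∩ {y | i.1.2 ≤ ⟪y, i.1.1⟫}).Nonempty := by
    obtain ⟨y, hyK, hy⟩ := nonempty_diff_biUnion_of_mul_measure_inter_lt hK hI
      (B := fun i : ι => {y | ⟪y, i.1.1⟫ < i.1.2}) fun i _ => i.2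
    simp only [mem_iUnion₂, not_exists] at hy
    exact ⟨y, mem_iInter₂.mpr fun i hi => ⟨hyK, show i.1.2 ≤ ⟪y, i.1.1⟫ from not_lt.mp (hy i hi)⟩⟩
  obtain ⟨x, hx⟩ := Convex.helly_theorem_compact' (𝕜 := ℝ)
    (F := fun i : ι => K ∩ {y | i.1.2 ≤ ⟪y, i.1.1⟫}) (fun i => hKconv.inter (convex_halfSpace_ge
      ⟨fun a b => inner_add_left a b _, fun r a => real_inner_smul_left a _ r⟩ _))
    (fun i => hKc.inter_right (isClosed_le continuous_const (by fun_prop))) hinter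
  refine ⟨x, fun θ => ?_⟩
  by_contra! h
  obtain ⟨c, hxc, hc⟩ := exists_lt_mul_measure_inter_lt hKc.isClosed.measurableSet
    hKc.measure_lt_top.ne (by fun_prop : Measurable fun y => ⟪y, θ⟫) (by simp) h
  exact hxc.not_ge (mem_iInter.mp hx ⟨(θ, c), hc⟩).2

theorem Convex.ofReal_pow_mul_measure_inter_inner_le {K : Set E} (hK : Convex ℝ K) {p : E}
    (hp : p ∈ K) (θ : E) {r : ℝ} (hr₀ : 0 ≤ r) (hr₁ : r ≤ 1) (c : ℝ) :
    ENNReal.ofReal (r ^ finrank ℝ E) * μ (K ∩ {y | ⟪y, θ⟫ ≤ c}) ≤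
      μ (K ∩ {y | ⟪y, θ⟫ ≤ ⟪p, θ⟫ + r * (c - ⟪p, θ⟫)}) := by
  rw [← abs_of_nonneg (pow_nonneg hr₀ _), ← Measure.addHaar_image_homothety μ p]
  refine measure_mono ?_
  rintro _ ⟨a, ⟨haK, hac : ⟪a, θ⟫ ≤ c⟩, rfl⟩
  refine ⟨?_, ?_⟩
  · rw [AffineMap.homothety_eq_lineMap]
    exact hK.lineMap_mem hp haK ⟨hr₀, hr₁⟩
  · simp only [mem_ofPred_eq, AffineMap.homothety_apply, vsub_eq_sub, vadd_eq_add,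
      inner_add_left, real_inner_smul_left, inner_sub_left]
    nlinarith

theorem measure_inter_setOf_inner_le_le {K : Set E} (hK : μ K ≠ ⊤) {θ : E} (hθ : θ ≠ 0)
    {δ t : ℝ} (hH : ENNReal.ofReal (1 - δ) * μ K ≤ μ ({y | t ≤ ⟪y, θ⟫} ∩ K)) :
    μ (K ∩ {y | ⟪y, θ⟫ ≤ t}) ≤ ENNReal.ofReal δ * μ K := by
  set H := {y : E | t ≤ ⟪y, θ⟫}
  have hsub : K ∩ {y | ⟪y, θ⟫ ≤ t} ⊆ (K \ H) ∪ {y | ⟪y, θ⟫ = t} :=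
    fun y ⟨hyK, hyt⟩ => (lt_or_eq_of_le hyt).imp (fun h => ⟨hyK, not_le.mpr h⟩) id
  have hdiff : μ (K \ H) + ENNReal.ofReal (1 - δ) * μ K ≤
      ENNReal.ofReal δ * μ K + ENNReal.ofReal (1 - δ) * μ K := by
    calc _ ≤ μ (K \ H) + μ (K ∩ H) := by rw [inter_comm] at hH; gcongr
      _ = μ K :=
        measure_sdiff_add_inter K (isClosed_le continuous_const (by fun_prop)).measurableSet
      _ ≤ (ENNReal.ofReal δ + ENNReal.ofReal (1 - δ)) * μ K :=
        le_mul_of_one_le_left zero_le (by simpa using ENNReal.ofReal_add_le (p := δ) (q := 1 - δ))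
      _ = _ := add_mul _ _ _
  calc μ (K ∩ {y | ⟪y, θ⟫ ≤ t}) ≤ μ (K \ H) + μ {y | ⟪y, θ⟫ = t} :=
        (measure_mono hsub).trans (measure_union_le _ _)
    _ = μ (K \ H) := by rw [addHaar_setOf_inner_eq μ hθ, add_zero]
    _ ≤ ENNReal.ofReal δ * μ K :=
        (ENNReal.add_le_add_iff_right (ENNReal.mul_ne_top ENNReal.ofReal_ne_top hK)).mp hdiff

theorem natCast_add_one_mul_le_two_mul_rpow_inv_pow {n : ℕ} (hn : n ≠ 0) {δ : ℝ} (hδ : 0 ≤ δ) :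
    (n + 1) * δ ≤ (2 * δ ^ (n : ℝ)⁻¹) ^ n := by
  rw [mul_pow, Real.rpow_inv_natCast_pow hδ hn]
  gcongr
  exact_mod_cast Nat.lt_two_pow_self

theorem IsCenterpoint.inner_sub_le_mul {K : Set E} {x : E} (hx : IsCenterpoint μ K x)
    (hKconv : Convex ℝ K) (hK₀ : μ K ≠ 0) (hKfin : μ K ≠ ⊤) {θ p : E} (hθ : θ ≠ 0)
    (hp : p ∈ K) (hpmin : ∀ y ∈ K, ⟪p, θ⟫ ≤ ⟪y, θ⟫) {δ s t : ℝ} (hs₀ : 0 ≤ s) (hs₁ : s < 1)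
    (hδs : (finrank ℝ E + 1) * δ ≤ s ^ finrank ℝ E)
    (hcap : μ (K ∩ {y | ⟪y, θ⟫ ≤ t}) ≤ ENNReal.ofReal δ * μ K) :
    t - ⟪p, θ⟫ ≤ s * (⟪x, θ⟫ - ⟪p, θ⟫) := by
  set n := finrank ℝ E
  have hn : n ≠ 0 := (finrank_pos_iff_exists_ne_zero.mpr ⟨θ, hθ⟩).ne'
  have ha : ⟪p, θ⟫ < ⟪x, θ⟫ := by
    obtain ⟨y, hyK, hy⟩ := hx.exists_inner_lt hK₀ hθ
    exact (hpmin y hyK).trans_lt hy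
  by_contra! h
  set r := min 1 ((t - ⟪p, θ⟫) / (⟪x, θ⟫ - ⟪p, θ⟫))
  have hsr : s < r := lt_min hs₁ ((lt_div_iff₀ (sub_pos.mpr ha)).mpr h)
  have hrt : ⟪p, θ⟫ + r * (⟪x, θ⟫ - ⟪p, θ⟫) ≤ t := by
    have := mul_le_mul_of_nonneg_right (min_le_right 1 ((t - ⟪p, θ⟫) / (⟪x, θ⟫ - ⟪p, θ⟫)))
      (sub_pos.mpr ha).le
    rw [div_mul_cancel₀ _ (sub_pos.mpr ha).ne'] at this
    linarith
  have hvol : ENNReal.ofReal (r ^ n) * μ K ≤ ENNReal.ofReal ((n + 1) * δ) * μ K :=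
    calc ENNReal.ofReal (r ^ n) * μ K
        ≤ ENNReal.ofReal (r ^ n) * ((n + 1) * μ (K ∩ {y | ⟪y, θ⟫ ≤ ⟪x, θ⟫})) := by
          gcongr; exact hx θ
      _ = (n + 1) * (ENNReal.ofReal (r ^ n) * μ (K ∩ {y | ⟪y, θ⟫ ≤ ⟪x, θ⟫})) := by ring
      _ ≤ (n + 1) * μ (K ∩ {y | ⟪y, θ⟫ ≤ t}) := by
          gcongr
          exact (hKconv.ofReal_pow_mul_measure_inter_inner_le hp θ (hs₀.trans hsr.le)
            (min_le_left _ _) _).trans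
            (measure_mono (inter_subset_inter_right _ fun y hy => le_trans hy hrt))
      _ ≤ (n + 1) * (ENNReal.ofReal δ * μ K) := by gcongr
      _ = ENNReal.ofReal ((n + 1) * δ) * μ K := by
          rw [ENNReal.ofReal_mul (by positivity)]
          norm_cast
          ring
  have hrs : r ^ n ≤ s ^ n :=
    ((ENNReal.ofReal_le_ofReal_iff'.mp ((ENNReal.mul_le_mul_iff_left hK₀ hKfin).mp hvol))
      |>.resolve_right (pow_pos (hs₀.trans_lt hsr) n).not_ge).trans hδs
  exact (pow_lt_pow_left₀ hsr hs₀ hn).not_ge hrs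

theorem IsCenterpoint.le_inner_homothety {K : Set E} {x : E} (hx : IsCenterpoint μ K x)
    (hKc : IsCompact K) (hKconv : Convex ℝ K) (hK₀ : μ K ≠ 0) {θ : E} (hθ : θ ≠ 0) {δ t : ℝ}
    (hδ₀ : 0 ≤ δ) (hδ : δ ≤ 8 ^ (-(finrank ℝ E : ℝ)))
    (hH : ENNReal.ofReal (1 - δ) * μ K ≤ μ ({y | t ≤ ⟪y, θ⟫} ∩ K)) {y : E} (hy : y ∈ K) :
    t ≤ ⟪(1 + 8 * δ ^ (finrank ℝ E : ℝ)⁻¹)⁻¹ • (y - x) + x, θ⟫ := by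
  set n := finrank ℝ E
  set ε := δ ^ (n : ℝ)⁻¹
  have hn : n ≠ 0 := (finrank_pos_iff_exists_ne_zero.mpr ⟨θ, hθ⟩).ne'
  have hε₀ : 0 ≤ ε := by positivity
  have hε : ε ≤ 8⁻¹ :=
    calc ε ≤ ((8 : ℝ) ^ (-(n : ℝ))) ^ (n : ℝ)⁻¹ := Real.rpow_le_rpow hδ₀ hδ (by positivity)
      _ = 8⁻¹ := by
        rw [← Real.rpow_mul (by norm_num), neg_mul, mul_inv_cancel₀ (by exact_mod_cast hn),
          Real.rpow_neg_one]
  obtain ⟨p, hp, hpmin⟩ :=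
    hKc.exists_isMinOn ⟨y, hy⟩ (by fun_prop : Continuous fun y => ⟪y, θ⟫).continuousOn
  have hwidth := hx.inner_sub_le_mul hKconv hK₀ hKc.measure_lt_top.ne hθ hp hpmin (s := 2 * ε)
    (by positivity) (by linarith) (natCast_add_one_mul_le_two_mul_rpow_inv_pow hn hδ₀)
    (measure_inter_setOf_inner_le_le hKc.measure_lt_top.ne hθ hH)
  have hpx : ⟪p, θ⟫ ≤ ⟪x, θ⟫ := by
    obtain ⟨z, hzK, hz⟩ := hx.exists_inner_lt hK₀ hθ
    exact (hpmin hzK).trans hz.le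
  have hlam : (1 + 8 * ε)⁻¹ ≤ 1 - 2 * ε := by
    rw [inv_le_iff_one_le_mul₀ (by positivity)]
    nlinarith
  rw [inner_add_left, real_inner_smul_left, inner_sub_left]
  calc t ≤ (1 - 2 * ε) * (⟪p, θ⟫ - ⟪x, θ⟫) + ⟪x, θ⟫ := by linarith
    _ ≤ (1 + 8 * ε)⁻¹ * (⟪p, θ⟫ - ⟪x, θ⟫) + ⟪x, θ⟫ :=
      add_le_add_left (mul_le_mul_of_nonpos_right hlam (sub_nonpos.mpr hpx)) _
    _ ≤ (1 + 8 * ε)⁻¹ * (⟪y, θ⟫ - ⟪x, θ⟫) + ⟪x, θ⟫ := by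
      gcongr
      exact hpmin hy

end Centerpoint

theorem mem_floatingBody_iff {d : ℕ} {K : Set (Euc d)} {δ : ℝ} {z : Euc d} :
    z ∈ floatingBody K δ ↔ ∀ θ : Euc d, ‖θ‖ = 1 → ∀ t : ℝ,
      ENNReal.ofReal (1 - δ) * volume K ≤ volume ({x | t ≤ ⟪x, θ⟫} ∩ K) → t ≤ ⟪z, θ⟫ := by
  simp only [floatingBody, mem_sInter, mem_ofPred_eq]
  constructor
  · exact fun h θ hθ t hH => h _ ⟨θ, t, hθ, rfl, hH⟩
  · rintro h _ ⟨θ, t, hθ, rfl, hH⟩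
    exact h θ hθ t hH

theorem floatingBody_subset {d : ℕ} {K : Set (Euc d)} (hKconv : Convex ℝ K) (hKc : IsClosed K)
    (hKne : K.Nonempty) {δ : ℝ} (hδ : 0 ≤ δ) : floatingBody K δ ⊆ K := by
  intro z hz
  by_contra hzK
  obtain ⟨θ, hθ, t, hzt, hKt⟩ :=
    exists_norm_eq_one_forall_le_inner_of_notMem_closed hKconv hKc hKne hzK
  refine hzt.not_ge (mem_floatingBody_iff.mp hz θ hθ t ?_)
  rw [inter_eq_right.mpr (show K ⊆ {x | t ≤ ⟪x, θ⟫} from hKt)]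
  exact mul_le_of_le_one_left zero_le (ENNReal.ofReal_le_one.mpr (by linarith))

/-- For every convex body `K ⊆ ℝᵈ` and every `δ ≤ 8^{-d}`, the floating body `K_δ`
is nonempty and `d_𝔏(K, K_δ) ≤ 1 + 8 δ^{1/d}`. -/
theorem logHausdorffDist_floatingBody_le
    (d : ℕ) (K : Set (Euc d)) (hK : IsConvexBody K)
    (δ : ℝ) (hδ0 : 0 < δ) (hδ : δ ≤ (8 : ℝ) ^ (-(d : ℝ))) :
    (floatingBody K δ).Nonempty ∧
      logHausdorffDist K (floatingBody K δ) ≤ 1 + 8 * δ ^ ((d : ℝ)⁻¹) := by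
  obtain ⟨hKc, hKconv, hKint⟩ := hK
  have hK₀ : volume K ≠ 0 := (Measure.measure_pos_of_nonempty_interior _ hKint).ne'
  obtain ⟨x, hx⟩ := exists_isCenterpoint hKc hKconv hK₀
  have hxK : x ∈ interior K := hx.mem_interior hKconv hKint
  set lam := 1 + 8 * δ ^ (d : ℝ)⁻¹
  have hlam : 1 < lam := lt_add_of_pos_right 1 (by positivity)
  have hshrink : (fun y => lam⁻¹ • (y - x) + x) '' K ⊆ floatingBody K δ := by
    rintro _ ⟨y, hy, rfl⟩
    refine mem_floatingBody_iff.mpr fun θ hθ t hH => ?_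
    have hθ₀ : θ ≠ 0 := norm_ne_zero_iff.mp (hθ ▸ one_ne_zero)
    simpa only [finrank_euclideanSpace_fin] using hx.le_inner_homothety hKc hKconv hK₀ hθ₀
      hδ0.le (by rwa [finrank_euclideanSpace_fin]) hH hy
  have hxL : x ∈ interior (floatingBody K δ) :=
    interior_mono hshrink (self_mem_interior_image_homothety hxK (by positivity))
  have hgrow : floatingBody K δ ⊆ (fun y => lam • (y - x) + x) '' K :=
    (floatingBody_subset hKconv hKc.isClosed ⟨x, interior_subset hxK⟩ hδ0.le).trans
      ((hKconv.subset_interior_image_homothety_of_one_lt hxK lam hlam).trans interior_subset)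
  refine ⟨⟨x, interior_subset hxL⟩, csInf_le ⟨1, fun _ h => h.1⟩ ⟨hlam.le, x, ?_, hshrink, hgrow⟩⟩
  rw [interior_inter]
  exact ⟨hxK, hxL⟩
end
end

section
/- Let K ⊂ ℝᵈ be a convex body whose centroid is at the origin, and let δ ≤ 8^{−d}. Then (1 − 4·δ^{1/d})·K ⊆ K_δ. -/
open MeasureTheory Metric Set
open scoped RealInnerProductSpace ENNReal Pointwise

noncomputable section

/-! Write `f = ⟪·, θ⟫` and let `z` be a lowest point of `K`; `f z < 0` because the centroid is the
origin. The homothety of ratio `r ∈ [0, 1]` centred at `z` maps `K ∩ {f ≤ 0}` into the cap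
`K ∩ {f ≤ (1 - r) f z}`, and a weak Grünbaum inequality `vol (K ∩ {f ≤ 0}) ≥ 4⁻ᵈ vol K` then gives
the cap volume at least `(r / 4)ᵈ vol K`. Grünbaum's inequality itself follows from the same
homothety argument: either the lowest point is far below `0` relative to the width of `K`, or the
half-scale copy of `K` at its highest point lies so high that the centroid condition forces
`K ∩ {f ≤ 0}` to be at least as large. Taking `r` slightly above `4 δ^{1/d}`, a halfspace
`{t ≤ f}` with `t > (1 - 4 δ^{1/d}) f z` would leave more than `δ vol K` of `K` outside. -/

open AffineMap Module

section Homothety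

variable {E : Type*} [NormedAddCommGroup E] [NormedSpace ℝ E]

lemma Convex.mapsTo_homothety {K : Set E} (hK : Convex ℝ K) {z : E} (hz : z ∈ K) {r : ℝ}
    (hr : r ∈ Icc (0 : ℝ) 1) : MapsTo (homothety z r) K K := fun y hy => by
  simpa only [homothety_eq_lineMap] using hK.lineMap_mem hz hy hr

lemma ContinuousLinearMap.apply_homothety (f : StrongDual ℝ E) (z : E) (r : ℝ) (y : E) :
    f (homothety z r y) = f z + r * (f y - f z) := by
  simp only [homothety_apply, vsub_eq_sub, vadd_eq_add, map_add, map_smul, map_sub, smul_eq_mul]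
  ring

variable [FiniteDimensional ℝ E] [MeasurableSpace E] [BorelSpace E] (μ : Measure E)
  [μ.IsAddHaarMeasure]

lemma pow_finrank_mul_measureReal_le_of_mapsTo_homothety {A B : Set E} {z : E} {r : ℝ}
    (hr : 0 ≤ r) (hAB : MapsTo (homothety z r) A B) (hB : μ B ≠ ∞) :
    r ^ finrank ℝ E * μ.real A ≤ μ.real B := by
  calc r ^ finrank ℝ E * μ.real A = μ.real (homothety z r '' A) := by
        simp [Measure.real, Measure.addHaar_image_homothety, abs_of_nonneg, hr]
    _ ≤ μ.real B := measureReal_mono hAB.image_subset hB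

lemma Convex.pow_finrank_mul_measureReal_inter_le {K : Set E} (hK : Convex ℝ K)
    (hKμ : μ K ≠ ∞) {z : E} (hz : z ∈ K) {r : ℝ} (hr : r ∈ Icc (0 : ℝ) 1) {A B : Set E}
    (hAB : ∀ y ∈ K, y ∈ A → homothety z r y ∈ B) :
    r ^ finrank ℝ E * μ.real (K ∩ A) ≤ μ.real (K ∩ B) :=
  pow_finrank_mul_measureReal_le_of_mapsTo_homothety μ hr.1
    (fun y hy => ⟨hK.mapsTo_homothety hz hr hy.1, hAB y hy.1 hy.2⟩)
    (measure_ne_top_of_subset inter_subset_left hKμ)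

end Homothety

lemma mul_measureReal_add_mul_measureReal_le_setIntegral {α : Type*} [MeasurableSpace α]
    {μ : Measure α} {K : Set α} {g : α → ℝ} (hK : MeasurableSet K) (hKμ : μ K ≠ ∞)
    (hg : Measurable g) (hgK : IntegrableOn g K μ) {a m : ℝ} (ha : ∀ y ∈ K, a ≤ g y)
    (hm : 0 < m) :
    a * μ.real (K ∩ {y | g y ≤ 0}) + m * μ.real (K ∩ {y | m ≤ g y}) ≤ ∫ y in K, g y ∂μ := by
  have hfin : ∀ S ⊆ K, μ S ≠ ∞ := fun S hS => measure_ne_top_of_subset hS hKμ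
  have hlow : MeasurableSet {y | g y ≤ 0} := measurableSet_le hg measurable_const
  have hsup : MeasurableSet {y | m ≤ g y} := measurableSet_le measurable_const hg
  rw [← integral_inter_add_sdiff hlow hgK]
  gcongr
  · exact setIntegral_ge_of_const_le_real (hK.inter hlow) (hfin _ inter_subset_left)
      (fun y hy => ha y hy.1) (hgK.mono_set inter_subset_left)
  · calc m * μ.real (K ∩ {y | m ≤ g y}) ≤ ∫ y in K ∩ {y | m ≤ g y}, g y ∂μ :=
          setIntegral_ge_of_const_le_real (hK.inter hsup) (hfin _ inter_subset_left)
            (fun y hy => hy.2) (hgK.mono_set inter_subset_left)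
      _ ≤ ∫ y in K \ {y | g y ≤ 0}, g y ∂μ := by
        refine setIntegral_mono_set (hgK.mono_set sdiff_subset) ?_ ?_
        · filter_upwards [ae_restrict_mem (hK.diff hlow)] with y hy
          exact (not_le.1 hy.2).le
        · exact LE.le.eventuallyLE fun y hy => ⟨hy.1, not_le.2 (hm.trans_le hy.2)⟩

lemma exists_gt_mem_Icc_sub_mul_lt {a ρ t : ℝ} (ha : a < 0) (hρ0 : 0 ≤ ρ) (hρ : ρ < 1)
    (ht : (1 - ρ) * a < t) : ∃ r ∈ Icc (0 : ℝ) 1, ρ < r ∧ (1 - r) * a < t := by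
  set s := min 0 (((1 - ρ) * a + t) / 2)
  have hs0 : s ≤ 0 := min_le_left _ _
  have hst : s < t := (min_le_right _ _).trans_lt (by linarith)
  have hρs : (1 - ρ) * a < s := lt_min (mul_neg_of_pos_of_neg (by linarith) ha) (by linarith)
  refine ⟨1 - s / a, ⟨?_, sub_le_self _ (div_nonneg_of_nonpos hs0 ha.le)⟩, ?_, ?_⟩
  · rw [sub_nonneg, div_le_one_of_neg ha]
    nlinarith
  · rw [lt_sub_comm, div_lt_iff_of_neg ha]
    linarith
  · rwa [sub_sub_cancel, div_mul_cancel₀ _ ha.ne]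

section ConvexBody

variable {E : Type*} [NormedAddCommGroup E] [NormedSpace ℝ E] [MeasurableSpace E] [BorelSpace E]
  (μ : Measure E) {K : Set E} {f : StrongDual ℝ E}

lemma exists_isMinOn_apply_neg_of_setIntegral_eq_zero [μ.IsOpenPosMeasure]
    [IsFiniteMeasureOnCompacts μ] (hKc : IsCompact K)
    (hKi : (interior K).Nonempty) (hf : f ≠ 0) (hcent : ∫ y in K, f y ∂μ = 0) :
    ∃ z ∈ K, IsMinOn f K z ∧ f z < 0 := by
  obtain ⟨z, hz, hmin⟩ := hKc.exists_isMinOn (hKi.mono interior_subset) f.continuous.continuousOn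
  refine ⟨z, hz, hmin, ?_⟩
  by_contra! hz0
  have hnonneg : ∀ y ∈ K, 0 ≤ f y := fun y hy => hz0.trans (hmin hy)
  have hae : f =ᵐ[μ.restrict K] 0 :=
    (setIntegral_eq_zero_iff_of_nonneg_ae (ae_restrict_of_forall_mem hKc.measurableSet hnonneg)
      (f.continuous.continuousOn.integrableOn_compact hKc)).1 hcent
  have hzero : EqOn f 0 (interior K) :=
    Measure.eqOn_open_of_ae_eq (ae_restrict_of_ae_restrict_of_subset interior_subset hae)
      isOpen_interior f.continuous.continuousOn continuousOn_const
  have hker : LinearMap.ker (f : E →ₗ[ℝ] ℝ) = ⊤ :=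
    Submodule.eq_top_of_nonempty_interior' _
      (hKi.mono (interior_maximal (fun y hy => hzero hy) isOpen_interior))
  exact hf (ContinuousLinearMap.coe_injective (LinearMap.ker_eq_top.1 hker))

variable [FiniteDimensional ℝ E] [μ.IsAddHaarMeasure]

theorem Convex.inv_four_pow_mul_measureReal_le_inter_nonpos (hKc : IsCompact K)
    (hK : Convex ℝ K) (hKi : (interior K).Nonempty) (hf : f ≠ 0)
    (hcent : ∫ y in K, f y ∂μ = 0) :
    4⁻¹ ^ finrank ℝ E * μ.real K ≤ μ.real (K ∩ {y | f y ≤ 0}) := by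
  have hKμ : μ K ≠ ∞ := hKc.measure_lt_top.ne
  obtain ⟨za, hza, hmin, ha⟩ := exists_isMinOn_apply_neg_of_setIntegral_eq_zero μ hKc hKi hf hcent
  obtain ⟨zb, hzb, hmax⟩ :=
    hKc.exists_isMaxOn (hKi.mono interior_subset) f.continuous.continuousOn
  have hb : 0 < f zb := by
    obtain ⟨z, hz, -, hz0⟩ := exists_isMinOn_apply_neg_of_setIntegral_eq_zero μ hKc hKi
      (neg_ne_zero.2 hf) (by simp [integral_neg, hcent])
    have := hmax hz
    simp only [neg_apply, mem_ofPred_eq] at hz0 this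
    linarith
  set a := f za
  set b := f zb
  rcases le_or_gt b (-3 * a) with hba | hba
  · -- the homothety from the lowest point with ratio `-a / (b - a) ≥ 1/4` squeezes `K` below `0`
    have hr : -a / (b - a) ∈ Icc (0 : ℝ) 1 :=
      ⟨div_nonneg (by linarith) (by linarith), (div_le_one (by linarith)).2 (by linarith)⟩
    have hcone := hK.pow_finrank_mul_measureReal_inter_le μ hKμ hza hr (A := univ)
      (B := {y | f y ≤ 0}) fun y hy _ => by
        have hyb : f y ≤ b := hmax hy
        have : -a / (b - a) * (f y - a) ≤ -a / (b - a) * (b - a) :=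
          mul_le_mul_of_nonneg_left (by linarith) hr.1
        rw [div_mul_cancel₀ _ (by linarith)] at this
        simp only [mem_ofPred_eq, f.apply_homothety]
        linarith
    calc 4⁻¹ ^ finrank ℝ E * μ.real K ≤ (-a / (b - a)) ^ finrank ℝ E * μ.real K := by
          gcongr
          rw [le_div_iff₀ (by linarith)]
          linarith
      _ ≤ μ.real (K ∩ {y | f y ≤ 0}) := by simpa using hcone
  · -- the half-scale copy of `K` at the highest point lies above `(a + b) / 2 > -a`, and the
    -- centroid balances it against `K ∩ {f ≤ 0}`
    have hcone := hK.pow_finrank_mul_measureReal_inter_le μ hKμ hzb ⟨by norm_num, by norm_num⟩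
      (r := 2⁻¹) (A := univ) (B := {y | (a + b) / 2 ≤ f y}) fun y hy _ => by
        have hay : a ≤ f y := hmin hy
        simp only [mem_ofPred_eq, f.apply_homothety]
        linarith
    rw [inter_univ] at hcone
    have hbal := mul_measureReal_add_mul_measureReal_le_setIntegral hKc.measurableSet hKμ
      f.continuous.measurable (f.continuous.continuousOn.integrableOn_compact hKc)
      (fun y hy => hmin hy) (m := (a + b) / 2) (by linarith)
    rw [hcent] at hbal
    have hW : μ.real (K ∩ {y | (a + b) / 2 ≤ f y}) ≤ μ.real (K ∩ {y | f y ≤ 0}) := by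
      nlinarith [measureReal_nonneg (μ := μ) (s := K ∩ {y | (a + b) / 2 ≤ f y})]
    calc 4⁻¹ ^ finrank ℝ E * μ.real K ≤ 2⁻¹ ^ finrank ℝ E * μ.real K := by gcongr; norm_num
      _ ≤ μ.real (K ∩ {y | f y ≤ 0}) := hcone.trans hW

theorem Convex.div_four_pow_mul_measureReal_le_inter_le (hKc : IsCompact K) (hK : Convex ℝ K)
    (hKi : (interior K).Nonempty) (hf : f ≠ 0) (hcent : ∫ y in K, f y ∂μ = 0) {z : E}
    (hz : z ∈ K) {r : ℝ} (hr : r ∈ Icc (0 : ℝ) 1) :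
    (r / 4) ^ finrank ℝ E * μ.real K ≤ μ.real (K ∩ {y | f y ≤ (1 - r) * f z}) := by
  have hcone := hK.pow_finrank_mul_measureReal_inter_le μ hKc.measure_lt_top.ne hz hr
    (A := {y | f y ≤ 0}) (B := {y | f y ≤ (1 - r) * f z}) fun y _ hy => by
      have hy0 : f y ≤ 0 := hy
      have : r * (f y - f z) ≤ r * (0 - f z) := mul_le_mul_of_nonneg_left (by linarith) hr.1
      simp only [mem_ofPred_eq, f.apply_homothety]
      linarith
  calc (r / 4) ^ finrank ℝ E * μ.real K
      = r ^ finrank ℝ E * (4⁻¹ ^ finrank ℝ E * μ.real K) := by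
        rw [div_eq_mul_inv, mul_pow, mul_assoc]
    _ ≤ r ^ finrank ℝ E * μ.real (K ∩ {y | f y ≤ 0}) := by
        have := hr.1
        gcongr
        exact hK.inv_four_pow_mul_measureReal_le_inter_nonpos μ hKc hKi hf hcent
    _ ≤ _ := hcone

theorem Convex.le_mul_apply_of_measureReal_sdiff_le (hKc : IsCompact K) (hK : Convex ℝ K)
    (hKi : (interior K).Nonempty) (hf : f ≠ 0) (hcent : ∫ y in K, f y ∂μ = 0) {ρ t : ℝ}
    (hρ0 : 0 ≤ ρ) (hρ1 : ρ < 1)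
    (hcap : μ.real (K \ {y | t ≤ f y}) ≤ (ρ / 4) ^ finrank ℝ E * μ.real K) {x : E}
    (hx : x ∈ K) : t ≤ (1 - ρ) * f x := by
  have hKμ : μ K ≠ ∞ := hKc.measure_lt_top.ne
  obtain ⟨z, hz, hmin, ha⟩ := exists_isMinOn_apply_neg_of_setIntegral_eq_zero μ hKc hKi hf hcent
  have hzx : f z ≤ f x := hmin hx
  by_contra! htx
  obtain ⟨r, hr, hρr, hrt⟩ := exists_gt_mem_Icc_sub_mul_lt ha hρ0 hρ1 (by nlinarith)
  have hsub : K ∩ {y | f y ≤ (1 - r) * f z} ⊆ K \ {y | t ≤ f y} := fun y hy =>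
    ⟨hy.1, fun hty => by
      have hyr : f y ≤ (1 - r) * f z := hy.2
      have hty : t ≤ f y := hty
      linarith⟩
  have hV : 0 < μ.real K :=
    ENNReal.toReal_pos (Measure.measure_pos_of_nonempty_interior μ hKi).ne' hKμ
  have hn : finrank ℝ E ≠ 0 := fun h => hf <| by
    have := Module.finrank_zero_iff.1 h
    ext v
    rw [Subsingleton.elim v 0, map_zero, zero_apply]
  have := calc (r / 4) ^ finrank ℝ E * μ.real K
        ≤ μ.real (K ∩ {y | f y ≤ (1 - r) * f z}) :=
          hK.div_four_pow_mul_measureReal_le_inter_le μ hKc hKi hf hcent hz hr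
      _ ≤ μ.real (K \ {y | t ≤ f y}) :=
          measureReal_mono hsub (measure_ne_top_of_subset sdiff_subset hKμ)
      _ ≤ (ρ / 4) ^ finrank ℝ E * μ.real K := hcap
      _ < (r / 4) ^ finrank ℝ E * μ.real K := by gcongr
  exact lt_irrefl _ this

end ConvexBody

lemma measureReal_sdiff_le_of_le_measure_inter {α : Type*} [MeasurableSpace α] {μ : Measure α}
    {s t : Set α} {δ : ℝ} (hs : μ s ≠ ∞) (ht : MeasurableSet t) (hδ : δ ≤ 1)
    (h : ENNReal.ofReal (1 - δ) * μ s ≤ μ (t ∩ s)) : μ.real (s \ t) ≤ δ * μ.real s := by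
  have hsplit := measureReal_inter_add_sdiff ht hs
  have h' := ENNReal.toReal_mono (measure_ne_top_of_subset inter_subset_right hs) h
  rw [ENNReal.toReal_mul, ENNReal.toReal_ofReal (by linarith), inter_comm] at h'
  change (1 - δ) * μ.real s ≤ μ.real (s ∩ t) at h'
  linarith

/-- If `K ⊆ ℝᵈ` is a convex body with centroid at the origin and `δ ≤ 8^{-d}`, then
`(1 - 4 δ^{1/d}) K ⊆ K_δ`. -/
theorem smul_subset_floatingBody
    (d : ℕ) (K : Set (Euc d)) (hK : IsConvexBody K)
    (hcent : (∫ x in K, x) = (0 : Euc d))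
    (δ : ℝ) (hδ0 : 0 < δ) (hδ : δ ≤ (8 : ℝ) ^ (-(d : ℝ))) :
    (1 - 4 * δ ^ ((d : ℝ)⁻¹)) • K ⊆ floatingBody K δ := by
  obtain ⟨hKc, hKconv, hKi⟩ := hK
  rintro _ ⟨x, hx, rfl⟩ H ⟨θ, t, hθ, rfl, hvol⟩
  have hd : d ≠ 0 := by
    rintro rfl
    simp [Subsingleton.elim θ 0] at hθ
  have hf : innerSLFlip ℝ θ ≠ 0 := fun h => by
    have := congrArg (fun L => L θ) h
    simp [hθ] at this
  have hfK : ∫ y in K, innerSLFlip ℝ θ y = 0 := by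
    rw [(innerSLFlip ℝ θ).integral_comp_comm (φ := fun y => y)
      (continuousOn_id.integrableOn_compact hKc), hcent, map_zero]
  have hroot : δ ^ ((d : ℝ)⁻¹) ≤ 8⁻¹ := by
    calc δ ^ ((d : ℝ)⁻¹) ≤ ((8 : ℝ) ^ (-(d : ℝ))) ^ ((d : ℝ)⁻¹) := by gcongr
      _ = 8⁻¹ := by
        rw [← Real.rpow_mul (by norm_num), neg_mul, mul_inv_cancel₀ (by exact_mod_cast hd),
          Real.rpow_neg_one]
  have hcap : volume.real (K \ {y | t ≤ innerSLFlip ℝ θ y})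
      ≤ (4 * δ ^ ((d : ℝ)⁻¹) / 4) ^ finrank ℝ (Euc d) * volume.real K := by
    rw [mul_div_cancel_left₀ _ four_ne_zero, finrank_euclideanSpace_fin, ← Real.rpow_natCast,
      ← Real.rpow_mul hδ0.le, inv_mul_cancel₀ (by exact_mod_cast hd), Real.rpow_one]
    exact measureReal_sdiff_le_of_le_measure_inter hKc.measure_lt_top.ne
      (measurableSet_le measurable_const (by fun_prop))
      (hδ.trans (Real.rpow_le_one_of_one_le_of_nonpos (by norm_num) (by simp))) hvol
  rw [mem_ofPred_eq, real_inner_smul_left]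
  exact hKconv.le_mul_apply_of_measureReal_sdiff_le volume hKc hKi hf hfK (by positivity)
    (by linarith) hcap hx
end
end

section
/- Let d ∈ ℕ, let K = Δᵈ = {x ∈ ℝᵈ : xᵢ ≥ 0 for all i, Σᵢ xᵢ ≤ 1} be the standard simplex, and let δ ∈ (0, 8^{−d}]. Then K_δ ⊆ {x ∈ ℝᵈ : x₁ ≤ 1 − δ^{1/d}} and d_𝔏(K, K_δ) ≥ 1 + (1/2)·δ^{1/d}. -/
open MeasureTheory Set
open scoped RealInnerProductSpace ENNReal

noncomputable section

/-- The standard simplex `Δᵈ = {x : ∀ i, xᵢ ≥ 0, Σ xᵢ ≤ 1}`. -/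
def stdSimplex' (d : ℕ) : Set (Euc d) :=
  {x : Euc d | (∀ i, 0 ≤ x i) ∧ ∑ i, x i ≤ 1}

/-
Write `ε = δ^(1/d)`. The part of `Δᵈ` where `x₁ > 1 - ε` is carried by an affine symmetry of the
simplex into the part where `∑ xᵢ < ε`, which lies in `ε • Δᵈ`; so it has relative volume at most
`εᵈ = δ`, and `K_δ` lies in `x₁ ≤ 1 - ε`. Consequently if `λ⁻¹ (K - x) + x ⊆ K_δ` with `x ∈ K`,
evaluating at the vertex `e₁` forces `λ ≥ 1 + ε`.

For the infimum not to be that of the empty set (whose `sInf` is `0`), one shows that `K_δ`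
contains the copy of `Δᵈ` shrunk by `1/2` about its centroid. After moving the vertex where
`⟪·, θ⟫` is smallest to the origin, a halfspace `t ≤ ∑ aᵢ xᵢ` with `a ≥ 0` and
`t > ∑ aᵢ / (2(d+1))` misses the image of `Δᵈ` under the diagonal map with entries
`(max 1 (aᵢ / s))⁻¹` for some `s < t`. The relative volume of that image is
`∏ (max 1 (aᵢ / s))⁻¹ ≥ e^{-∑ aᵢ / 2s} > e^{-(d+1)} ≥ 8^{-d} ≥ δ`, using `max 1 y ≤ e^{y/2}`.
-/

open scoped Pointwise

section Measure

variable {α : Type*} [MeasurableSpace α] {μ : Measure α} {K H : Set α} {δ : ℝ}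

theorem ofReal_one_sub_mul_le_measure_inter_iff (hH : MeasurableSet H) (hK : μ K ≠ ∞)
    (hδ₀ : 0 ≤ δ) (hδ₁ : δ ≤ 1) :
    ENNReal.ofReal (1 - δ) * μ K ≤ μ (H ∩ K) ↔ μ (K \ H) ≤ ENNReal.ofReal δ * μ K := by
  have hsplit : μ (H ∩ K) + μ (K \ H) =
      ENNReal.ofReal (1 - δ) * μ K + ENNReal.ofReal δ * μ K := by
    rw [← add_mul, ← ENNReal.ofReal_add (by linarith) hδ₀, sub_add_cancel, ENNReal.ofReal_one,
      one_mul, inter_comm, measure_inter_add_sdiff K hH]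
  have hfin : ∀ c, ENNReal.ofReal c * μ K ≠ ∞ := fun _ =>
    ENNReal.mul_ne_top ENNReal.ofReal_ne_top hK
  constructor
  · intro h
    rw [← ENNReal.add_le_add_iff_left (hfin (1 - δ)), ← hsplit]
    gcongr
  · intro h
    rw [← ENNReal.add_le_add_iff_right (hfin δ), ← hsplit]
    gcongr

end Measure

theorem max_one_le_exp_half {y : ℝ} (hy : 0 ≤ y) : max 1 y ≤ Real.exp (y / 2) := by
  refine max_le (Real.one_le_exp (by positivity)) ?_
  have hexp : Real.exp (y / 2) = Real.exp (y / 2 - 1) * Real.exp 1 := by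
    rw [← Real.exp_add, sub_add_cancel]
  calc y = y / 2 * 2 := by ring
    _ ≤ Real.exp (y / 2 - 1) * Real.exp 1 := by
      gcongr
      · linarith [Real.add_one_le_exp (y / 2 - 1)]
      · linarith [Real.add_one_le_exp 1]
    _ = Real.exp (y / 2) := hexp.symm

theorem exp_add_one_le_eight_pow {d : ℕ} (hd : 0 < d) : Real.exp (d + 1) ≤ 8 ^ d := by
  have he : Real.exp 2 ≤ 8 := by
    have := Real.exp_one_lt_d9
    rw [show (2 : ℝ) = 1 + 1 by norm_num, Real.exp_add]
    nlinarith [Real.exp_pos 1]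
  have hd' : (1 : ℝ) ≤ d := by exact_mod_cast hd
  calc Real.exp (d + 1) ≤ Real.exp (d * 2) := Real.exp_le_exp.2 (by linarith)
    _ = Real.exp 2 ^ d := Real.exp_nat_mul 2 d
    _ ≤ 8 ^ d := pow_le_pow_left₀ (Real.exp_pos 2).le he d

theorem inv_eight_pow_lt_prod_inv_max {d : ℕ} (hd : 0 < d) {a : Fin d → ℝ} {s : ℝ}
    (ha : ∀ i, 0 ≤ a i) (hs : 0 < s) (hsum : ∑ i, a i < 2 * (d + 1) * s) :
    ((8 : ℝ) ^ d)⁻¹ < ∏ i, (max 1 (a i / s))⁻¹ := by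
  rw [Finset.prod_inv_distrib, inv_lt_inv₀ (by positivity)
    (Finset.prod_pos fun i _ => one_pos.trans_le (le_max_left _ _))]
  calc ∏ i, max 1 (a i / s) ≤ ∏ i, Real.exp (a i / s / 2) :=
        Finset.prod_le_prod (fun i _ => zero_le_one.trans (le_max_left _ _))
          (fun i _ => max_one_le_exp_half (div_nonneg (ha i) hs.le))
    _ = Real.exp ((∑ i, a i) / (2 * s)) := by
        rw [← Real.exp_sum, Finset.sum_div]
        congr 1
        exact Finset.sum_congr rfl fun i _ => by ring
    _ < Real.exp (d + 1) := Real.exp_lt_exp.2 (by rw [div_lt_iff₀ (by positivity)]; linarith)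
    _ ≤ 8 ^ d := exp_add_one_le_eight_pow hd

section Simplex

variable {d : ℕ} {δ : ℝ}

theorem inner_eq_sum (x θ : Euc d) : ⟪x, θ⟫ = ∑ i, θ i * x i := by
  simp [PiLp.inner_apply]

theorem convex_stdSimplex' : Convex ℝ (stdSimplex' d) := by
  rintro x ⟨hx₀, hx₁⟩ y ⟨hy₀, hy₁⟩ a b ha hb hab
  refine ⟨fun i => ?_, ?_⟩
  · simp only [PiLp.add_apply, PiLp.smul_apply, smul_eq_mul]
    exact add_nonneg (mul_nonneg ha (hx₀ i)) (mul_nonneg hb (hy₀ i))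
  · simp only [PiLp.add_apply, PiLp.smul_apply, smul_eq_mul, Finset.sum_add_distrib,
      ← Finset.mul_sum]
    nlinarith

theorem isBounded_stdSimplex' : Bornology.IsBounded (stdSimplex' d) :=
  ((PiLp.antilipschitzWith_ofLp 2 _).isBounded_preimage (Metric.isBounded_Icc 0 1)).subset
    fun _ hx => ⟨hx.1, fun i =>
      (Finset.single_le_sum (fun j _ => hx.1 j) (Finset.mem_univ i)).trans hx.2⟩

theorem single_mem_stdSimplex' (j : Fin d) : EuclideanSpace.single j 1 ∈ stdSimplex' d := by
  refine ⟨fun i => ?_, by simp [PiLp.single_apply]⟩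
  simp only [PiLp.single_apply]
  split_ifs <;> norm_num

theorem mem_smul_stdSimplex' {ε : ℝ} (hε : 0 < ε) {y : Euc d} (hy : ∀ i, 0 ≤ y i)
    (hsum : ∑ i, y i ≤ ε) : y ∈ ε • stdSimplex' d := by
  refine ⟨ε⁻¹ • y, ⟨fun i => ?_, ?_⟩, smul_inv_smul₀ hε.ne' y⟩
  · simpa using mul_nonneg (inv_nonneg.2 hε.le) (hy i)
  · simpa [← Finset.mul_sum, inv_mul_le_iff₀ hε] using hsum

def simplexCentroid (d : ℕ) : Euc d := WithLp.toLp 2 fun _ => ((d : ℝ) + 1)⁻¹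

@[simp]
theorem simplexCentroid_apply (i : Fin d) : simplexCentroid d i = ((d : ℝ) + 1)⁻¹ := rfl

theorem simplexCentroid_mem_interior : simplexCentroid d ∈ interior (stdSimplex' d) := by
  have hopen : IsOpen {x : Euc d | (∀ i, 0 < x i) ∧ ∑ i, x i < 1} := by
    simp only [ofPred_and, ofPred_forall]
    exact (isOpen_iInter_of_finite fun i => isOpen_lt continuous_const (by fun_prop)).inter
      (isOpen_lt (by fun_prop) continuous_const)
  have hsum : ∑ i, simplexCentroid d i < 1 := by
    simp only [simplexCentroid_apply, Finset.sum_const, Finset.card_univ, Fintype.card_fin,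
      nsmul_eq_mul]
    rw [← div_eq_mul_inv, div_lt_one (by positivity)]
    linarith
  refine interior_maximal ?_ hopen ⟨fun i => by simp only [simplexCentroid_apply]; positivity, hsum⟩
  exact fun x hx => ⟨fun i => (hx.1 i).le, hx.2.le⟩

theorem volume_stdSimplex'_pos : 0 < volume (stdSimplex' d) :=
  Measure.measure_pos_of_nonempty_interior _ ⟨_, simplexCentroid_mem_interior⟩

theorem volume_stdSimplex'_ne_top : volume (stdSimplex' d) ≠ ∞ :=
  isBounded_stdSimplex'.measure_lt_top.ne

/-- The affine symmetry of `stdSimplex' d` exchanging the vertices `0` and `e j` and fixing the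
others. -/
def vertexSwap (j : Fin d) (x : Euc d) : Euc d :=
  x + (1 - ∑ k, x k - x j) • EuclideanSpace.single j 1

theorem vertexSwap_apply (j : Fin d) (x : Euc d) (i : Fin d) :
    vertexSwap j x i = if i = j then 1 - ∑ k, x k else x i := by
  simp only [vertexSwap, PiLp.add_apply, PiLp.smul_apply, PiLp.single_apply, smul_eq_mul]
  split_ifs with h
  · subst h; ring
  · ring

theorem sum_vertexSwap (j : Fin d) (x : Euc d) : ∑ i, vertexSwap j x i = 1 - x j := by
  simp only [vertexSwap, PiLp.add_apply, PiLp.smul_apply, PiLp.single_apply, smul_eq_mul,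
    Finset.sum_add_distrib, mul_ite, mul_one, mul_zero, Finset.sum_ite_eq', Finset.mem_univ,
    if_true]
  ring

theorem vertexSwap_vertexSwap (j : Fin d) (x : Euc d) : vertexSwap j (vertexSwap j x) = x := by
  ext i
  rw [vertexSwap_apply, sum_vertexSwap, vertexSwap_apply]
  split_ifs with h
  · subst h; ring
  · rfl

theorem vertexSwap_mem_stdSimplex' (j : Fin d) {x : Euc d} (hx : x ∈ stdSimplex' d) :
    vertexSwap j x ∈ stdSimplex' d := by
  refine ⟨fun i => ?_, by rw [sum_vertexSwap]; linarith [hx.1 j]⟩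
  rw [vertexSwap_apply]
  split_ifs
  · linarith [hx.2]
  · exact hx.1 i

theorem image_vertexSwap_stdSimplex' (j : Fin d) :
    vertexSwap j '' stdSimplex' d = stdSimplex' d :=
  (image_subset_iff.2 fun _ => vertexSwap_mem_stdSimplex' j).antisymm fun x hx =>
    ⟨vertexSwap j x, vertexSwap_mem_stdSimplex' j hx, vertexSwap_vertexSwap j x⟩

theorem vertexSwap_simplexCentroid (j : Fin d) :
    vertexSwap j (simplexCentroid d) = simplexCentroid d := by
  ext i
  rw [vertexSwap_apply]
  split_ifs
  · simp only [simplexCentroid_apply, Finset.sum_const, Finset.card_univ, Fintype.card_fin,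
      nsmul_eq_mul]
    field_simp
    ring
  · rfl

/-- `vertexSwap j` is a translate of a linear map, whose determinant has absolute value one
because the map preserves the simplex, a set of finite positive volume. -/
theorem volume_image_vertexSwap (j : Fin d) (s : Set (Euc d)) :
    volume (vertexSwap j '' s) = volume s := by
  let L : Euc d →L[ℝ] Euc d := ContinuousLinearMap.id ℝ (Euc d) -
    ContinuousLinearMap.smulRight
      ((∑ k, EuclideanSpace.proj k : Euc d →L[ℝ] ℝ) + EuclideanSpace.proj j)
      (EuclideanSpace.single j 1)
  have hL : ∀ u, volume (vertexSwap j '' u) =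
      ENNReal.ofReal |LinearMap.det (L : Euc d →ₗ[ℝ] Euc d)| * volume u := by
    intro u
    have : vertexSwap j = (EuclideanSpace.single j 1 + ·) ∘ L := by
      ext x i
      simp [vertexSwap, L]
      split_ifs <;> ring
    rw [this, image_comp, image_add_left, measure_preimage_add,
      Measure.addHaar_image_continuousLinearMap]
  have hdet : ENNReal.ofReal |LinearMap.det (L : Euc d →ₗ[ℝ] Euc d)| = 1 := by
    have := hL (stdSimplex' d)
    rw [image_vertexSwap_stdSimplex'] at this
    exact (ENNReal.mul_eq_right volume_stdSimplex'_pos.ne' volume_stdSimplex'_ne_top).1 this.symm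
  rw [hL, hdet, one_mul]

theorem inner_vertexSwap (j : Fin d) (x θ : Euc d) :
    ⟪vertexSwap j x, θ⟫ = θ j + ∑ i, (θ i - θ j - if i = j then θ j else 0) * x i := by
  simp only [vertexSwap, inner_add_left, real_inner_smul_left, inner_eq_sum, sub_mul,
    Finset.sum_sub_distrib, ite_mul, zero_mul, Finset.sum_ite_eq', Finset.mem_univ, if_true,
    ← Finset.mul_sum]
  simp [PiLp.single_apply]
  ring

theorem floatingBody_subset_halfspace {K : Set (Euc d)} {θ : Euc d} (hθ : θ ≠ 0) {t : ℝ}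
    (hvol : ENNReal.ofReal (1 - δ) * volume K ≤ volume ({x | t ≤ ⟪x, θ⟫} ∩ K)) :
    floatingBody K δ ⊆ {x | t ≤ ⟪x, θ⟫} := by
  have hn : 0 < ‖θ‖ := norm_pos_iff.2 hθ
  have hH : {x : Euc d | ‖θ‖⁻¹ * t ≤ ⟪x, ‖θ‖⁻¹ • θ⟫} = {x | t ≤ ⟪x, θ⟫} := by
    ext x
    simp [real_inner_smul_right, mul_le_mul_iff_right₀ (inv_pos.2 hn)]
  rw [← hH] at hvol ⊢
  exact sInter_subset_of_mem ⟨_, _, norm_smul_inv_norm hθ, rfl, hvol⟩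

theorem floatingBody_subset_halfspace_of_subset {K : Set (Euc d)} {θ : Euc d} (hθ : θ ≠ 0)
    {t : ℝ} (hδ : 0 ≤ δ) (hK : K ⊆ {x | t ≤ ⟪x, θ⟫}) :
    floatingBody K δ ⊆ {x | t ≤ ⟪x, θ⟫} :=
  floatingBody_subset_halfspace hθ <| by
    rw [inter_eq_right.2 hK]
    exact mul_le_of_le_one_left (zero_le ..) (ENNReal.ofReal_le_one.2 (by linarith))

theorem floatingBody_stdSimplex'_subset (hd : 0 < d) (hδ : 0 ≤ δ) :
    floatingBody (stdSimplex' d) δ ⊆ stdSimplex' d := by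
  intro x hx
  refine ⟨fun i => ?_, ?_⟩
  · have := floatingBody_subset_halfspace_of_subset (θ := EuclideanSpace.single i 1) (t := 0)
      (by simp) hδ
      (fun y hy => by simpa [inner_eq_sum, PiLp.single_apply] using hy.1 i) hx
    simpa [inner_eq_sum, PiLp.single_apply] using this
  · have hne : (-WithLp.toLp 2 fun _ => 1 : Euc d) ≠ 0 := fun h => by
      simpa using congrArg (· ⟨0, hd⟩) h
    have := floatingBody_subset_halfspace_of_subset (t := -1) hne hδ
      (fun y hy => by simpa [inner_eq_sum] using hy.2) hx
    simpa [inner_eq_sum] using this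

theorem floatingBody_stdSimplex'_subset_coord_le (hδ₀ : 0 < δ) (hδ₁ : δ ≤ 1) (j : Fin d) :
    floatingBody (stdSimplex' d) δ ⊆ {x | x j ≤ 1 - δ ^ (d : ℝ)⁻¹} := by
  set ε := δ ^ (d : ℝ)⁻¹
  have hε : 0 < ε := Real.rpow_pos_of_pos hδ₀ _
  have hεd : ε ^ d = δ := by
    rw [← Real.rpow_natCast, ← Real.rpow_mul hδ₀.le,
      inv_mul_cancel₀ (by exact_mod_cast j.pos.ne'), Real.rpow_one]
  have hH : {x : Euc d | -(1 - ε) ≤ ⟪x, -EuclideanSpace.single j 1⟫} = {x | x j ≤ 1 - ε} := by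
    ext x
    simp only [mem_ofPred_eq, inner_neg_right, EuclideanSpace.inner_single_right, one_mul,
      conj_trivial, neg_le_neg_iff]
  rw [← hH]
  refine floatingBody_subset_halfspace (by simp) ?_
  rw [ofReal_one_sub_mul_le_measure_inter_iff (measurableSet_le measurable_const (by fun_prop))
    volume_stdSimplex'_ne_top hδ₀.le hδ₁, hH]
  calc volume (stdSimplex' d \ {x | x j ≤ 1 - ε})
      ≤ volume (vertexSwap j '' (ε • stdSimplex' d)) := by
        refine measure_mono fun x ⟨hxK, hx⟩ => ⟨vertexSwap j x, ?_, vertexSwap_vertexSwap j x⟩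
        refine mem_smul_stdSimplex' hε (vertexSwap_mem_stdSimplex' j hxK).1 ?_
        rw [sum_vertexSwap]
        simp only [mem_ofPred_eq, not_le] at hx
        linarith
    _ = ENNReal.ofReal δ * volume (stdSimplex' d) := by
        rw [volume_image_vertexSwap, Measure.addHaar_smul, finrank_euclideanSpace_fin,
          abs_of_pos (pow_pos hε d), hεd]

/-- The diagonal map with entries `(max 1 (a i / s))⁻¹` shrinks the simplex into the sublevel set
`∑ a i * x i ≤ s`. -/
theorem ofReal_prod_mul_volume_le_volume_sublevel {a : Fin d → ℝ} {s : ℝ} (hs : 0 < s) :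
    ENNReal.ofReal (∏ i, (max 1 (a i / s))⁻¹) * volume (stdSimplex' d) ≤
      volume ({x : Euc d | ∑ i, a i * x i ≤ s} ∩ stdSimplex' d) := by
  set c : Fin d → ℝ := fun i => (max 1 (a i / s))⁻¹
  have hc₀ : ∀ i, 0 ≤ c i := fun i => inv_nonneg.2 (zero_le_one.trans (le_max_left _ _))
  have hc₁ : ∀ i, c i ≤ 1 := fun i => inv_le_one_of_one_le₀ (le_max_left _ _)
  have hac : ∀ i, a i * c i ≤ s := fun i => by
    rw [← div_eq_mul_inv, div_le_iff₀ (one_pos.trans_le (le_max_left _ _))]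
    calc a i = s * (a i / s) := by field_simp
      _ ≤ s * max 1 (a i / s) := by gcongr; exact le_max_right _ _
  have hdet : LinearMap.det (Matrix.toLpLin 2 2 (Matrix.diagonal c)) = ∏ i, c i := by
    rw [Matrix.toLpLin_eq_toLin, LinearMap.det_toLin, Matrix.det_diagonal]
  set D := Matrix.toLpLin 2 2 (Matrix.diagonal c)
  have hD : ∀ x i, D x i = c i * x i := by
    simp [D, Matrix.toLpLin_apply, Matrix.mulVec_diagonal]
  calc ENNReal.ofReal (∏ i, c i) * volume (stdSimplex' d) = volume (D '' stdSimplex' d) := by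
        rw [Measure.addHaar_image_linearMap, hdet,
          abs_of_nonneg (Finset.prod_nonneg fun i _ => hc₀ i)]
    _ ≤ _ := by
        refine measure_mono ?_
        rintro _ ⟨x, ⟨hx₀, hx₁⟩, rfl⟩
        refine ⟨?_, fun i => ?_, ?_⟩
        · calc ∑ i, a i * D x i = ∑ i, a i * c i * x i := by simp only [hD, mul_assoc]
            _ ≤ ∑ i, s * x i := by gcongr with i; exacts [hx₀ i, hac i]
            _ = s * ∑ i, x i := (Finset.mul_sum ..).symm
            _ ≤ s := mul_le_of_le_one_right hs.le hx₁
        · rw [hD]; exact mul_nonneg (hc₀ i) (hx₀ i)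
        · calc ∑ i, D x i ≤ ∑ i, x i := by
                gcongr with i
                rw [hD]; exact mul_le_of_le_one_left (hx₀ i) (hc₁ i)
            _ ≤ 1 := hx₁

theorem threshold_le_of_nonneg (hd : 0 < d) (hδ₀ : 0 ≤ δ) (hδ : δ ≤ ((8 : ℝ) ^ d)⁻¹)
    {a : Fin d → ℝ} (ha : ∀ i, 0 ≤ a i) {t : ℝ}
    (hvol : ENNReal.ofReal (1 - δ) * volume (stdSimplex' d) ≤
      volume ({x : Euc d | t ≤ ∑ i, a i * x i} ∩ stdSimplex' d)) :
    t ≤ (∑ i, a i) / (2 * (d + 1)) := by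
  by_contra! ht
  set B := (∑ i, a i) / (2 * (d + 1))
  have hB : 0 ≤ B := div_nonneg (Finset.sum_nonneg fun i _ => ha i) (by positivity)
  obtain ⟨s, hBs, hst⟩ := exists_between ht
  have hs : 0 < s := hB.trans_lt hBs
  have hsum : ∑ i, a i < 2 * (d + 1) * s := by
    rwa [div_lt_iff₀ (by positivity), mul_comm] at hBs
  have hδ₁ : δ ≤ 1 := hδ.trans (inv_le_one_of_one_le₀ (one_le_pow₀ (by norm_num)))
  have hcompl := (ofReal_one_sub_mul_le_measure_inter_iff
    (measurableSet_le measurable_const (by fun_prop)) volume_stdSimplex'_ne_top hδ₀ hδ₁).1 hvol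
  have hsub : {x : Euc d | ∑ i, a i * x i ≤ s} ∩ stdSimplex' d ⊆
      stdSimplex' d \ {x | t ≤ ∑ i, a i * x i} :=
    fun x hx => ⟨hx.2, fun h => hst.not_ge ((show t ≤ _ from h).trans hx.1)⟩
  have hprod := (ofReal_prod_mul_volume_le_volume_sublevel hs).trans
    ((measure_mono hsub).trans hcompl)
  rw [ENNReal.mul_le_mul_iff_left volume_stdSimplex'_pos.ne' volume_stdSimplex'_ne_top,
    ENNReal.ofReal_le_ofReal_iff hδ₀] at hprod
  linarith [inv_eight_pow_lt_prod_inv_max hd ha hs hsum]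

/-- `T` is an affine symmetry of the simplex carrying the origin to a vertex where `⟪·, θ⟫` is
smallest, so that in the coordinates given by `T` the functional has nonnegative coefficients. -/
theorem threshold_le_midpoint_of_chart (hd : 0 < d) (hδ₀ : 0 ≤ δ) (hδ : δ ≤ ((8 : ℝ) ^ d)⁻¹)
    {T : Euc d → Euc d} (hTvol : ∀ s, volume (T '' s) = volume s)
    (hTK : T '' stdSimplex' d = stdSimplex' d) {θ : Euc d} {a : Fin d → ℝ} {b : ℝ}
    (ha : ∀ i, 0 ≤ a i) (hTθ : ∀ x, ⟪T x, θ⟫ = b + ∑ i, a i * x i) {t : ℝ}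
    (hvol : ENNReal.ofReal (1 - δ) * volume (stdSimplex' d) ≤
      volume ({x | t ≤ ⟪x, θ⟫} ∩ stdSimplex' d))
    {y : Euc d} (hy : y ∈ stdSimplex' d) :
    t ≤ (⟪y, θ⟫ + ⟪T (simplexCentroid d), θ⟫) / 2 := by
  have hpre : {x : Euc d | t - b ≤ ∑ i, a i * x i} = T ⁻¹' {x | t ≤ ⟪x, θ⟫} := by
    ext x
    simp only [mem_ofPred_eq, mem_preimage, hTθ, sub_le_iff_le_add']
  have hbound : t - b ≤ (∑ i, a i) / (2 * (d + 1)) := by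
    refine threshold_le_of_nonneg hd hδ₀ hδ ha ?_
    rwa [hpre, inter_comm, ← hTvol (stdSimplex' d ∩ _), image_inter_preimage, hTK, inter_comm]
  obtain ⟨x, hx, rfl⟩ : y ∈ T '' stdSimplex' d := hTK.symm ▸ hy
  have hx₀ : 0 ≤ ∑ i, a i * x i := Finset.sum_nonneg fun i _ => mul_nonneg (ha i) (hx.1 i)
  have hc : ∑ i, a i * simplexCentroid d i = (∑ i, a i) / (d + 1) := by
    simp only [simplexCentroid_apply, ← Finset.sum_mul, div_eq_mul_inv]
  rw [hTθ, hTθ, hc]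
  have : (∑ i, a i) / (2 * (d + 1)) = (∑ i, a i) / (d + 1) / 2 := by field_simp
  linarith

theorem threshold_le_midpoint (hd : 0 < d) (hδ₀ : 0 ≤ δ) (hδ : δ ≤ ((8 : ℝ) ^ d)⁻¹)
    {θ : Euc d} {t : ℝ}
    (hvol : ENNReal.ofReal (1 - δ) * volume (stdSimplex' d) ≤
      volume ({x | t ≤ ⟪x, θ⟫} ∩ stdSimplex' d))
    {y : Euc d} (hy : y ∈ stdSimplex' d) :
    t ≤ (⟪y, θ⟫ + ⟪simplexCentroid d, θ⟫) / 2 := by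
  by_cases hθ : ∀ i, 0 ≤ θ i
  · exact threshold_le_midpoint_of_chart hd hδ₀ hδ (T := id) (b := 0) (fun s => by simp)
      (image_id _) hθ (fun x => by simp [inner_eq_sum]) hvol hy
  obtain ⟨i, hi⟩ := not_forall.1 hθ
  obtain ⟨j, -, hj⟩ := Finset.exists_min_image Finset.univ θ ⟨i, Finset.mem_univ i⟩
  have hθj : θ j < 0 := (hj i (Finset.mem_univ i)).trans_lt (not_le.1 hi)
  have ha : ∀ k, 0 ≤ θ k - θ j - if k = j then θ j else 0 := fun k => by
    split_ifs with hk
    · subst hk; linarith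
    · linarith [hj k (Finset.mem_univ k)]
  simpa [vertexSwap_simplexCentroid] using threshold_le_midpoint_of_chart hd hδ₀ hδ
    (volume_image_vertexSwap j) (image_vertexSwap_stdSimplex' j) ha (inner_vertexSwap j · θ)
    hvol hy

theorem image_homothety_half_subset_floatingBody (hd : 0 < d) (hδ₀ : 0 ≤ δ)
    (hδ : δ ≤ ((8 : ℝ) ^ d)⁻¹) :
    (fun y => (2 : ℝ)⁻¹ • (y - simplexCentroid d) + simplexCentroid d) '' stdSimplex' d ⊆
      floatingBody (stdSimplex' d) δ := by
  rintro _ ⟨y, hy, rfl⟩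
  refine mem_sInter.2 ?_
  rintro _ ⟨θ, t, -, rfl, hvol⟩
  have := threshold_le_midpoint hd hδ₀ hδ hvol hy
  simp only [mem_ofPred_eq, inner_add_left, real_inner_smul_left, inner_sub_left]
  linarith

theorem floatingBody_subset_image_homothety_two (hd : 0 < d) (hδ : 0 ≤ δ) :
    floatingBody (stdSimplex' d) δ ⊆
      (fun y => (2 : ℝ) • (y - simplexCentroid d) + simplexCentroid d) '' stdSimplex' d := by
  intro z hz
  refine ⟨(2 : ℝ)⁻¹ • (z - simplexCentroid d) + simplexCentroid d, ?_, by module⟩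
  convert convex_stdSimplex' (floatingBody_stdSimplex'_subset hd hδ hz)
    (interior_subset simplexCentroid_mem_interior) (by norm_num : (0 : ℝ) ≤ 2⁻¹)
    (by norm_num : (0 : ℝ) ≤ 2⁻¹) (by norm_num) using 1
  module

theorem simplexCentroid_mem_interior_inter_floatingBody (hd : 0 < d) (hδ₀ : 0 ≤ δ)
    (hδ : δ ≤ ((8 : ℝ) ^ d)⁻¹) :
    simplexCentroid d ∈ interior (stdSimplex' d ∩ floatingBody (stdSimplex' d) δ) := by
  set c := simplexCentroid d
  set g : Euc d → Euc d := fun z => (2 : ℝ) • (z - c) + c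
  refine mem_interior.2 ⟨g ⁻¹' interior (stdSimplex' d), fun z hz => ?_,
    isOpen_interior.preimage (by fun_prop), by simpa [g] using simplexCentroid_mem_interior⟩
  have hz : z ∈ floatingBody (stdSimplex' d) δ :=
    image_homothety_half_subset_floatingBody hd hδ₀ hδ ⟨g z, interior_subset hz, by module⟩
  exact ⟨floatingBody_stdSimplex'_subset hd hδ₀ hz, hz⟩

end Simplex

/-- For the standard simplex `K = Δᵈ` and `δ ∈ (0, 8^{-d}]`:
`K_δ ⊆ {x : x₁ ≤ 1 - δ^{1/d}}` and `d_𝔏(K, K_δ) ≥ 1 + (1/2) δ^{1/d}`. -/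
theorem simplex_floatingBody_lower_bound
    (d : ℕ) (hd : 0 < d) (δ : ℝ)
    (hδ : δ ∈ Set.Ioc (0 : ℝ) ((8 : ℝ) ^ (-(d : ℝ)))) :
    floatingBody (stdSimplex' d) δ ⊆
        {x : Euc d | x ⟨0, hd⟩ ≤ 1 - δ ^ ((d : ℝ)⁻¹)} ∧
      1 + (1 / 2) * δ ^ ((d : ℝ)⁻¹) ≤
        logHausdorffDist (stdSimplex' d) (floatingBody (stdSimplex' d) δ) := by
  obtain ⟨hδ₀, hδ₈⟩ := hδ
  rw [Real.rpow_neg (by norm_num), Real.rpow_natCast] at hδ₈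
  have hδ₁ : δ ≤ 1 := hδ₈.trans (inv_le_one_of_one_le₀ (one_le_pow₀ (by norm_num)))
  have hcap := floatingBody_stdSimplex'_subset_coord_le hδ₀ hδ₁ ⟨0, hd⟩
  refine ⟨hcap, le_csInf ⟨2, one_le_two, simplexCentroid d,
    simplexCentroid_mem_interior_inter_floatingBody hd hδ₀.le hδ₈,
    image_homothety_half_subset_floatingBody hd hδ₀.le hδ₈,
    floatingBody_subset_image_homothety_two hd hδ₀.le⟩ ?_⟩
  rintro lam ⟨hlam, x, hx, hsub, -⟩
  set ε := δ ^ (d : ℝ)⁻¹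
  have hε : 0 < ε := Real.rpow_pos_of_pos hδ₀ _
  have hx₀ : 0 ≤ x ⟨0, hd⟩ := (interior_subset hx).1.1 _
  have hvertex : lam⁻¹ * (1 - x ⟨0, hd⟩) + x ⟨0, hd⟩ ≤ 1 - ε := by
    simpa using hcap (hsub ⟨_, single_mem_stdSimplex' ⟨0, hd⟩, rfl⟩)
  have hlam' : ε ≤ 1 - lam⁻¹ := by
    nlinarith [mul_nonneg hx₀ (sub_nonneg.2 (inv_le_one_of_one_le₀ hlam))]
  have : lam * (1 - lam⁻¹) = lam - 1 := by field_simp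
  nlinarith
end
end

section
/- Let f be a log-concave probability density function on ℝ with mean zero and variance one, and let F be its cumulative distribution function. Then for all t ≥ 0, 1 − F(t) ≤ 2·e^{−t/10}. -/
open MeasureTheory Set
open scoped ENNReal

noncomputable section

/-- A function `f : ℝ → ℝ` is log-concave if
`f(λx + (1-λ)y) ≥ f(x)^λ f(y)^{1-λ}` for all `x, y` and `λ ∈ (0,1)`. -/
def IsLogConcaveFun (f : ℝ → ℝ) : Prop :=
  ∀ x y : ℝ, ∀ l ∈ Set.Ioo (0 : ℝ) 1,
    f x ^ l * f y ^ (1 - l) ≤ f (l * x + (1 - l) * y)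

/-! Chebyshev's inequality for the unit second moment yields a point `x₀ ∈ (-2, 2)` with
`f x₀ ≥ 3/16` and a point `a ∈ (3, 6)` with `f a ≤ 1/27`. By log-concavity, `log f` lies below its
chord through `x₀` and `a` to the right of `a`, so this drop forces `f s ≤ f a · e^{-(s-a)/10}`
for `s > a`, and integrating gives the bound for `t ≥ a`. For `t < a < 6` the right-hand side
already exceeds `1`. -/

open Real

namespace IsLogConcaveFun

variable {f : ℝ → ℝ}

theorem rpow_mul_rpow_le (hlc : IsLogConcaveFun f) {x y z : ℝ} (hxy : x < y) (hyz : y < z) :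
    f x ^ ((z - y) / (z - x)) * f z ^ ((y - x) / (z - x)) ≤ f y := by
  have hzx : 0 < z - x := by linarith
  have hl : (z - y) / (z - x) ∈ Ioo (0 : ℝ) 1 :=
    ⟨div_pos (by linarith) hzx, (div_lt_one hzx).2 (by linarith)⟩
  have hexp : 1 - (z - y) / (z - x) = (y - x) / (z - x) := by field_simp; ring
  have hpoint : (z - y) / (z - x) * x + (1 - (z - y) / (z - x)) * z = y := by
    field_simp; ring
  have := hlc x z _ hl
  rwa [hpoint, hexp] at this

theorem pos_and_mul_log_add_mul_log_le (hlc : IsLogConcaveFun f) {x y z : ℝ} (hxy : x < y)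
    (hyz : y < z) (hx : 0 < f x) (hz : 0 < f z) :
    0 < f y ∧ (z - y) * log (f x) + (y - x) * log (f z) ≤ (z - x) * log (f y) := by
  have hzx : 0 < z - x := by linarith
  have hprod : 0 < f x ^ ((z - y) / (z - x)) * f z ^ ((y - x) / (z - x)) := by positivity
  have hle := hlc.rpow_mul_rpow_le hxy hyz
  refine ⟨hprod.trans_le hle, ?_⟩
  have hlog := log_le_log hprod hle
  rw [log_mul (by positivity) (by positivity), log_rpow hx, log_rpow hz] at hlog
  calc (z - y) * log (f x) + (y - x) * log (f z)
      = (z - x) * ((z - y) / (z - x) * log (f x) + (y - x) / (z - x) * log (f z)) := by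
        field_simp
    _ ≤ (z - x) * log (f y) := mul_le_mul_of_nonneg_left hlog hzx.le

theorem le_mul_exp_of_lt (hlc : IsLogConcaveFun f) (hf : ∀ x, 0 ≤ f x) {x a L : ℝ}
    (hxa : x < a) (hx : 0 < f x) (hL : f a * exp (L * (a - x)) ≤ f x) {s : ℝ} (has : a < s) :
    f s ≤ f a * exp (L * (a - s)) := by
  rcases (hf s).eq_or_lt with hs | hs
  · rw [← hs]; exact mul_nonneg (hf a) (exp_pos _).le
  obtain ⟨ha, hconc⟩ := hlc.pos_and_mul_log_add_mul_log_le hxa has hx hs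
  have hLlog : log (f a) + L * (a - x) ≤ log (f x) := by
    rw [← log_exp (L * (a - x)), ← log_mul ha.ne' (exp_pos _).ne']
    exact log_le_log (by positivity) hL
  have hlog : log (f s) ≤ log (f a) + L * (a - s) := by
    refine le_of_mul_le_mul_left ?_ (sub_pos.2 hxa)
    nlinarith [mul_le_mul_of_nonneg_left hLlog (sub_pos.2 has).le]
  calc f s = exp (log (f s)) := (exp_log hs).symm
    _ ≤ exp (log (f a) + L * (a - s)) := exp_le_exp.2 hlog
    _ = f a * exp (L * (a - s)) := by rw [exp_add, exp_log ha]

end IsLogConcaveFun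

theorem integral_Ioi_exp_mul_sub {L : ℝ} (hL : 0 < L) (a t : ℝ) :
    ∫ s in Ioi t, exp (L * (a - s)) = exp (L * (a - t)) / L := by
  have hsplit : ∀ s, exp (L * (a - s)) = exp (L * a) * exp (-L * s) := fun s => by
    rw [← exp_add]; ring_nf
  simp_rw [hsplit, integral_const_mul, integral_exp_mul_Ioi (neg_lt_zero.2 hL), neg_div_neg_eq,
    ← mul_div_assoc]

theorem setIntegral_Ioi_le_of_le_mul_exp {f : ℝ → ℝ} {C L a t : ℝ} (hL : 0 < L)
    (hfi : IntegrableOn f (Ioi t)) (hle : ∀ s > t, f s ≤ C * exp (L * (a - s))) :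
    ∫ s in Ioi t, f s ≤ C / L * exp (L * (a - t)) := by
  have hexp : IntegrableOn (fun s => exp (L * (a - s))) (Ioi t) := by
    refine Integrable.congr ((integrableOn_exp_mul_Ioi (neg_lt_zero.2 hL) t).const_mul
      (exp (L * a))) (ae_of_all _ fun s => ?_)
    dsimp only; rw [← exp_add]; ring_nf
  calc ∫ s in Ioi t, f s ≤ ∫ s in Ioi t, C * exp (L * (a - s)) :=
        setIntegral_mono_on hfi (hexp.const_mul C) measurableSet_Ioi hle
    _ = C / L * exp (L * (a - t)) := by
        rw [integral_const_mul, integral_Ioi_exp_mul_sub hL]; ring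

section SecondMoment

variable {f : ℝ → ℝ} (hf : ∀ x, 0 ≤ f x) (hfi : Integrable f)
  (hm : Integrable fun x => x ^ 2 * f x)
include hf hfi hm

theorem mul_setIntegral_le_integral_sq_mul {S : Set ℝ} (hS : MeasurableSet S) {c : ℝ}
    (hc : ∀ x ∈ S, c ≤ x ^ 2) : c * ∫ x in S, f x ≤ ∫ x, x ^ 2 * f x := by
  rw [← integral_const_mul]
  calc ∫ x in S, c * f x ≤ ∫ x in S, x ^ 2 * f x :=
        setIntegral_mono_on (hfi.integrableOn.const_mul c) hm.integrableOn hS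
          fun x hx => mul_le_mul_of_nonneg_right (hc x hx) (hf x)
    _ ≤ ∫ x, x ^ 2 * f x :=
        setIntegral_le_integral hm (ae_of_all _ fun x => mul_nonneg (sq_nonneg x) (hf x))

theorem exists_mem_Ioo_neg_self_le_density {r : ℝ} (hr : 0 < r) :
    ∃ x ∈ Ioo (-r) r, ((∫ x, f x) - (∫ x, x ^ 2 * f x) / r ^ 2) / (2 * r) ≤ f x := by
  have hr' : -r < r := by linarith
  have hout : r ^ 2 * ∫ x in (Ioo (-r) r)ᶜ, f x ≤ ∫ x, x ^ 2 * f x := by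
    refine mul_setIntegral_le_integral_sq_mul hf hfi hm measurableSet_Ioo.compl fun x hx => ?_
    rcases not_and_or.1 hx with hx | hx <;> push Not at hx <;> nlinarith
  have hin : (∫ x, f x) - (∫ x, x ^ 2 * f x) / r ^ 2 ≤ ∫ x in Ioo (-r) r, f x := by
    rw [← integral_add_compl measurableSet_Ioo hfi, add_sub_assoc, add_le_iff_nonpos_right,
      sub_nonpos, le_div_iff₀' (by positivity)]
    exact hout
  obtain ⟨x, hx, hle⟩ :=
    exists_setAverage_le (s := Ioo (-r) r) (by simp [hr]) (by simp) hfi.integrableOn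
  refine ⟨x, hx, le_trans ?_ hle⟩
  rw [setAverage_eq, Real.volume_real_Ioo_of_le hr'.le, smul_eq_mul, inv_mul_eq_div,
    sub_neg_eq_add, ← two_mul]
  gcongr

theorem exists_mem_Ioo_density_le {r R : ℝ} (hr : 0 < r) (hrR : r < R) :
    ∃ x ∈ Ioo r R, f x ≤ (∫ x, x ^ 2 * f x) / (r ^ 2 * (R - r)) := by
  have hin : r ^ 2 * ∫ x in Ioo r R, f x ≤ ∫ x, x ^ 2 * f x :=
    mul_setIntegral_le_integral_sq_mul hf hfi hm measurableSet_Ioo fun x hx => by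
      nlinarith [hx.1]
  obtain ⟨x, hx, hle⟩ :=
    exists_le_setAverage (s := Ioo r R) (by simp [hrR]) (by simp) hfi.integrableOn
  refine ⟨x, hx, hle.trans ?_⟩
  rw [setAverage_eq, Real.volume_real_Ioo_of_le hrR.le, smul_eq_mul, inv_mul_eq_div,
    div_le_div_iff₀ (sub_pos.2 hrR) (by positivity)]
  calc (∫ x in Ioo r R, f x) * (r ^ 2 * (R - r)) = (r ^ 2 * ∫ x in Ioo r R, f x) * (R - r) := by
        ring
    _ ≤ (∫ x, x ^ 2 * f x) * (R - r) := mul_le_mul_of_nonneg_right hin (sub_pos.2 hrR).le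

end SecondMoment

theorem logconcave_tail_bound_general
    (f : ℝ → ℝ) (hf : ∀ x, 0 ≤ f x) (hlc : IsLogConcaveFun f)
    (hprob : ∫ x, f x = 1)
    (hvar : ∫ x, x ^ 2 * f x = 1) :
    ∀ t : ℝ, 0 ≤ t → 1 - (∫ s in Set.Iic t, f s) ≤ 2 * Real.exp (-t / 10) := by
  intro t _
  have hfi : Integrable f := .of_integral_ne_zero (by simp [hprob])
  have hm : Integrable fun x => x ^ 2 * f x := .of_integral_ne_zero (by simp [hvar])
  obtain ⟨x₀, ⟨hx₀l, hx₀r⟩, hfx₀⟩ := exists_mem_Ioo_neg_self_le_density hf hfi hm two_pos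
  obtain ⟨a, ⟨hal, har⟩, hfa⟩ :=
    exists_mem_Ioo_density_le hf hfi hm (r := 3) (R := 6) (by norm_num) (by norm_num)
  norm_num [hprob, hvar] at hfx₀ hfa
  have h35 : exp (3 / 5) ≤ 2 := (le_log_iff_exp_le two_pos).1 (by linarith [log_two_gt_d9])
  have hdrop : f a * exp (1 / 10 * (a - x₀)) ≤ f x₀ := by
    have : exp (1 / 10 * (a - x₀)) ≤ 3 :=
      (exp_le_exp.2 (by linarith)).trans exp_one_lt_three.le
    nlinarith [hf a]
  rw [← hprob, ← setIntegral_compl measurableSet_Iic hfi, compl_Iic]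
  rcases lt_or_ge t a with hta | hat
  · calc ∫ s in Ioi t, f s ≤ 1 := hprob ▸ setIntegral_le_integral hfi (ae_of_all _ hf)
      _ ≤ 2 * exp (-(3 / 5)) := by
          rw [exp_neg, ← div_eq_mul_inv, le_div_iff₀ (exp_pos _)]; linarith
      _ ≤ 2 * exp (-t / 10) := by gcongr; linarith
  · calc ∫ s in Ioi t, f s ≤ f a / (1 / 10) * exp (1 / 10 * (a - t)) :=
          setIntegral_Ioi_le_of_le_mul_exp (by norm_num) hfi.integrableOn fun s hs =>
            hlc.le_mul_exp_of_lt hf (by linarith) (by linarith) hdrop (by linarith)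
      _ = 10 * f a * exp (a / 10) * exp (-t / 10) := by rw [mul_assoc, ← exp_add]; ring_nf
      _ ≤ 10 * (1 / 27) * 2 * exp (-t / 10) := by
          gcongr
          exact (exp_le_exp.2 (by linarith)).trans h35
      _ ≤ 2 * exp (-t / 10) := by linarith [exp_pos (-t / 10)]

/-- For a log-concave probability density `f` on `ℝ` with mean zero and variance one,
with cdf `F(t) = ∫_{-∞}^t f`: for all `t ≥ 0`, `1 - F(t) ≤ 2 e^{-t/10}`. -/
theorem logconcave_tail_bound
    (f : ℝ → ℝ) (hf : ∀ x, 0 ≤ f x) (hlc : IsLogConcaveFun f)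
    (hprob : ∫ x, f x = 1) (hmean : ∫ x, x * f x = 0)
    (hvar : ∫ x, x ^ 2 * f x = 1) :
    ∀ t : ℝ, 0 ≤ t → 1 - (∫ s in Set.Iic t, f s) ≤ 2 * Real.exp (-t / 10) :=
  logconcave_tail_bound_general f hf hlc hprob hvar
end
end
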